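/- Let F be a finite family of closed intervals on ℝ. Define a greedy sequence: r₁ is the interval of F with minimal right endpoint; c₁ is an interval of F intersecting r₁ with maximal right endpoint y₁; inductively, rᵢ₊₁ is the interval with minimal right endpoint among intervals of F lying entirely in (yᵢ, ∞), and cᵢ₊₁ is an interval of F meeting rᵢ₊₁ with maximal right endpoint yᵢ₊₁; the process stops at step t when no interval of F lies entirely to the right of yₜ. Then {r₁, …, rₜ} is 2-remote in F (pairwise disjoint, and no interval of F meets two of them) and {c₁, …, cₜ} covers F (every interval of F intersects some cᵢ). -/
import Mathlib


/-- The closed interval associated to a pair. -/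
def Iv (p : ℝ × ℝ) : Set ℝ := Set.Icc p.1 p.2

/-- Two intervals meet (intersect). -/
def Meets (p q : ℝ × ℝ) : Prop := (Iv p ∩ Iv q).Nonempty

/-- `C` covers `F`: every interval of `F` meets some interval of `C`. -/
def IntCovers (C F : Finset (ℝ × ℝ)) : Prop := ∀ p ∈ F, ∃ q ∈ C, Meets p q

/-- `R` is 2-remote in `F`: pairwise disjoint and no interval of `F`
meets two distinct members of `R`. -/
def TwoRemote (F R : Finset (ℝ × ℝ)) : Prop :=
  (∀ p ∈ R, ∀ q ∈ R, p ≠ q → ¬ Meets p q) ∧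
  ∀ e ∈ F, ∀ p ∈ R, ∀ q ∈ R, p ≠ q → ¬ (Meets e p ∧ Meets e q)

lemma of_meets {p q : ℝ × ℝ} (h : Meets p q) : p.1 ≤ q.2 ∧ q.1 ≤ p.2 := by
  obtain ⟨x, hx1, hx2⟩ := h
  simp only [Iv, Set.mem_Icc] at hx1 hx2
  exact ⟨le_trans hx1.1 hx2.2, le_trans hx2.1 hx1.2⟩

lemma meets_of {p q : ℝ × ℝ} (hp : p.1 ≤ p.2) (hq : q.1 ≤ q.2)
    (h1 : p.1 ≤ q.2) (h2 : q.1 ≤ p.2) : Meets p q := by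
  refine ⟨max p.1 q.1, ?_, ?_⟩ <;> simp [Iv, Set.mem_Icc, hp, hq, h1, h2]

theorem stmt15 (F : Finset (ℝ × ℝ)) (hF : ∀ p ∈ F, p.1 ≤ p.2) (hne : F.Nonempty)
    (t : ℕ) (ht : 1 ≤ t) (r c : ℕ → ℝ × ℝ)
    (hrF : ∀ i < t, r i ∈ F) (hcF : ∀ i < t, c i ∈ F)
    -- `r 0` has minimal right endpoint in `F`
    (hr0 : ∀ p ∈ F, (r 0).2 ≤ p.2)
    -- `c i` meets `r i`
    (hmeet : ∀ i < t, Meets (c i) (r i))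
    -- `c i` has maximal right endpoint among intervals of `F` meeting `r i`
    (hcmax : ∀ i < t, ∀ p ∈ F, Meets p (r i) → p.2 ≤ (c i).2)
    -- `r (i+1)` lies entirely to the right of `yᵢ = (c i).2`, and has minimal
    -- right endpoint among such intervals of `F`
    (hrnext : ∀ i, i + 1 < t →
      (c i).2 < (r (i + 1)).1 ∧ ∀ p ∈ F, (c i).2 < p.1 → (r (i + 1)).2 ≤ p.2)
    -- the process stops: no interval of `F` lies entirely to the right of `yₜ`
    (hstop : ∀ p ∈ F, ¬ (c (t - 1)).2 < p.1) :
    TwoRemote F ((Finset.range t).image r) ∧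
    IntCovers ((Finset.range t).image c) F := by
  classical
  -- r i has right endpoint ≤ (c i).2
  have hr2c2 : ∀ i < t, (r i).2 ≤ (c i).2 := by
    intro i hi
    exact hcmax i hi (r i) (hrF i hi)
      (meets_of (hF _ (hrF i hi)) (hF _ (hrF i hi)) (hF _ (hrF i hi)) (hF _ (hrF i hi)))
  -- key chain inequality
  have A : ∀ j < t, ∀ i < j, (c i).2 < (r j).1 := by
    intro j
    induction j with
    | zero => intro _ i hi; omega
    | succ n ih =>
      intro hj i hi
      rcases Nat.lt_succ_iff_lt_or_eq.mp hi with h | h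
      · have h1 := ih (by omega) i h
        have h2 : (r n).1 ≤ (r n).2 := hF _ (hrF n (by omega))
        have h3 : (r n).2 ≤ (c n).2 := hr2c2 n (by omega)
        have h4 := (hrnext n hj).1
        linarith
      · subst h; exact (hrnext i hj).1
  -- helper: meets r j gives lower bound on right endpoint
  have B : ∀ e, ∀ j < t, Meets e (r j) → (r j).1 ≤ e.2 := by
    intro e j hj h; exact (of_meets h).2
  constructor
  · constructor
    · intro p hp q hq hpq hmpq
      simp only [Finset.mem_image, Finset.mem_range] at hp hq
      obtain ⟨i, hi, rfl⟩ := hp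
      obtain ⟨j, hj, rfl⟩ := hq
      have hij : i ≠ j := fun h => hpq (by rw [h])
      rcases hij.lt_or_gt with h | h
      · have := A j hj i h
        have h1 := (of_meets hmpq).2
        have h2 := hr2c2 i hi
        linarith
      · have := A i hi j h
        have h1 := (of_meets hmpq).1
        have h2 := hr2c2 j hj
        linarith
    · intro e he p hp q hq hpq ⟨h1, h2⟩
      simp only [Finset.mem_image, Finset.mem_range] at hp hq
      obtain ⟨i, hi, rfl⟩ := hp
      obtain ⟨j, hj, rfl⟩ := hq
      have hij : i ≠ j := fun h => hpq (by rw [h])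
      rcases hij.lt_or_gt with h | h
      · have h3 := hcmax i hi e he h1
        have h4 := B e j hj h2
        have h5 := A j hj i h
        linarith
      · have h3 := hcmax j hj e he h2
        have h4 := B e i hi h1
        have h5 := A i hi j h
        linarith
  · intro p hp
    have hex : ∃ i, i < t ∧ p.1 ≤ (c i).2 :=
      ⟨t - 1, by omega, le_of_not_gt (hstop p hp)⟩
    have hi : Nat.find hex < t := (Nat.find_spec hex).1
    have hile : p.1 ≤ (c (Nat.find hex)).2 := (Nat.find_spec hex).2
    refine ⟨c (Nat.find hex),
      Finset.mem_image.mpr ⟨Nat.find hex, Finset.mem_range.mpr hi, rfl⟩, ?_⟩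
    have hcle : (c (Nat.find hex)).1 ≤ p.2 := by
      rcases Nat.eq_zero_or_pos (Nat.find hex) with h0 | h0
      · have h1 : (c 0).1 ≤ (r 0).2 := (of_meets (hmeet 0 (by omega))).1
        have h2 := hr0 p hp
        rw [h0]; linarith
      · obtain ⟨k, hk1⟩ : ∃ k, Nat.find hex = k + 1 := ⟨Nat.find hex - 1, by omega⟩
        have hmin := Nat.find_min hex (m := k) (by omega)
        push_neg at hmin
        have hk : (c k).2 < p.1 := hmin (by omega)
        rw [hk1] at hi ⊢
        have h1 := (hrnext k hi).2 p hp hk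
        have h2 : (c (k+1)).1 ≤ (r (k+1)).2 := (of_meets (hmeet (k+1) hi)).1
        linarith
    exact meets_of (hF p hp) (hF _ (hcF _ hi)) hile hcle
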